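/- Let X be a real symmetric n×n matrix with ‖X‖ ≤ 1 but X^2 ≠ I. Then there exist a nonzero column vector β ∈ R^n and a real number γ such that the (n+1)×(n+1) symmetric matrix [[X, β],[β^T, γ]] has norm at most 1 (equivalently, its square is ⪯ I). -/

import Mathlib

open Matrix
open scoped ComplexOrder

/-!
Choose a unit eigenvector `v` of `X` whose eigenvalue `μ` has `μ² < 1`; one exists because
`X² ≤ 1` and `X² ≠ 1`. Take `β = √(1 - μ²) v` and `γ = -μ`. Since `Xβ = -γβ` and `βᵀβ + γ² = 1`,
the dilation `M` has `1 - M² = diag(1 - X² - (1 - μ²) v vᵀ, 0)`, and the top-left block is the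
compression `P (1 - X²) P` by the projection `P = 1 - v vᵀ`, so it is positive semidefinite.
-/

namespace Matrix

lemma PosSemidef.fromBlocks_zero {R : Type*} [Ring R] [PartialOrder R] [StarRing R]
    {n m : Type*} [Fintype n] [Fintype m] [DecidableEq n] {A : Matrix n n R} (hA : A.PosSemidef) :
    (fromBlocks A 0 0 0 : Matrix (n ⊕ m) (n ⊕ m) R).PosSemidef := by
  have h := hA.conjTranspose_mul_mul_same (fromCols (1 : Matrix n n R) (0 : Matrix n m R))
  rw [conjTranspose_fromCols_eq_fromRows_conjTranspose, fromRows_mul, fromRows_mul_fromCols] at h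
  simpa using h

section RCLike

variable {𝕜 : Type*} [RCLike 𝕜] {n : Type*} [Fintype n] [DecidableEq n]

lemma PosSemidef.sub_smul_vecMulVec_star_of_mulVec_eq {A : Matrix n n 𝕜} (hA : A.PosSemidef)
    {v : n → 𝕜} {c : ℝ} (hAv : A *ᵥ v = c • v) (hv : star v ⬝ᵥ v = 1) :
    (A - c • vecMulVec v (star v)).PosSemidef := by
  set Q := vecMulVec v (star v)
  have hQ : Qᴴ = Q := by simp [Q, conjTranspose_vecMulVec]
  have hAQ : A * Q = c • Q := by rw [mul_vecMulVec, hAv, smul_vecMulVec]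
  have hQA : Q * A = c • Q := by
    rw [vecMulVec_mul, ← hA.1.eq, ← star_mulVec, hAv, star_smul, star_trivial, vecMulVec_smul]
  have hQQ : Q * Q = Q := by rw [vecMulVec_mul_vecMulVec, hv, one_smul]
  have hcompress : (1 - Q)ᴴ * A * (1 - Q) = A - c • Q := by
    rw [conjTranspose_sub, conjTranspose_one, hQ]
    simp only [sub_mul, mul_sub, one_mul, mul_one, hQA, hAQ, smul_mul_assoc, hQQ]
    module
  exact hcompress ▸ hA.conjTranspose_mul_mul_same (1 - Q)

lemma one_sub_mul_self_mulVec_eq_smul {A : Matrix n n 𝕜} {v : n → 𝕜} {μ : ℝ}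
    (hAv : A *ᵥ v = μ • v) : (1 - A * A) *ᵥ v = (1 - μ ^ 2) • v := by
  rw [sub_mulVec, one_mulVec, ← mulVec_mulVec, hAv, mulVec_smul, hAv, smul_smul, sub_smul,
    one_smul, sq]

lemma IsHermitian.exists_eigenvalue_sq_ne_one {A : Matrix n n 𝕜} (hA : A.IsHermitian)
    (h : A * A ≠ 1) : ∃ i, hA.eigenvalues i ^ 2 ≠ 1 := by
  contrapose! h
  rw [hA.spectral_theorem, ← map_mul, diagonal_mul_diagonal,
    ← map_one (Unitary.conjStarAlgAut 𝕜 _ hA.eigenvectorUnitary), ← diagonal_one]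
  congr 2
  ext i
  simp [← sq, ← RCLike.ofReal_pow, h i]

lemma IsHermitian.exists_eigenvector_sq_lt_one {A : Matrix n n 𝕜} (hA : A.IsHermitian)
    (hc : (1 - A * A).PosSemidef) (hne : A * A ≠ 1) :
    ∃ (v : n → 𝕜) (μ : ℝ), A *ᵥ v = μ • v ∧ star v ⬝ᵥ v = 1 ∧ μ ^ 2 < 1 := by
  obtain ⟨i, hi⟩ := hA.exists_eigenvalue_sq_ne_one hne
  set v := ⇑(hA.eigenvectorBasis i)
  set μ := hA.eigenvalues i
  have hAv : A *ᵥ v = μ • v := hA.mulVec_eigenvectorBasis i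
  have hv : star v ⬝ᵥ v = 1 := by
    rw [dotProduct_comm, ← EuclideanSpace.inner_eq_star_dotProduct,
      inner_self_eq_norm_sq_to_K, hA.eigenvectorBasis.orthonormal.1 i]
    simp
  refine ⟨v, μ, hAv, hv, lt_of_le_of_ne ?_ hi⟩
  have hq := hc.dotProduct_mulVec_nonneg v
  rw [one_sub_mul_self_mulVec_eq_smul hAv, dotProduct_smul, hv, RCLike.real_smul_eq_coe_mul,
    mul_one, RCLike.ofReal_nonneg] at hq
  linarith

end RCLike

lemma one_sub_fromBlocks_mul_self {R : Type*} [CommRing R] {n ι : Type*} [Fintype n]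
    [DecidableEq n] [Unique ι] [DecidableEq ι] {X : Matrix n n R} (hX : X.IsSymm) {β : n → R} {γ : R}
    (hβ : X *ᵥ β = -γ • β) (hγ : β ⬝ᵥ β + γ ^ 2 = 1) :
    1 - fromBlocks X (replicateCol ι β) (replicateRow ι β) (of fun _ _ => γ) *
        fromBlocks X (replicateCol ι β) (replicateRow ι β) (of fun _ _ => γ) =
      fromBlocks (1 - X * X - vecMulVec β β) 0 0 0 := by
  have hβ' : β ᵥ* X = -γ • β := by rw [← mulVec_transpose, hX.eq, hβ]
  rw [fromBlocks_multiply, vecMulVec_eq ι, ← replicateCol_mulVec, ← replicateRow_vecMul, hβ, hβ',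
    replicateRow_mul_replicateCol]
  ext (i | i) (j | j) <;>
    simp [mul_apply, one_apply, ← hγ, sq, mul_comm, sub_sub, Unique.eq_default]

end Matrix

/-- A symmetric contraction `X` with `X² ≠ I` admits a nontrivial
symmetric contractive dilation `[[X, β],[βᵀ, γ]]`. -/
theorem contraction_not_symmetry_has_nontrivial_dilation
    (n : ℕ) (X : Matrix (Fin n) (Fin n) ℝ) (hs : X.IsSymm)
    (hc : (1 - X * X).PosSemidef) (hne : X * X ≠ 1) :
    ∃ (β : Fin n → ℝ) (γ : ℝ), β ≠ 0 ∧
      (1 - (Matrix.fromBlocks X (Matrix.of fun i (_ : Fin 1) => β i)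
              (Matrix.of fun (_ : Fin 1) j => β j) (Matrix.of fun _ _ => γ)) *
           (Matrix.fromBlocks X (Matrix.of fun i (_ : Fin 1) => β i)
              (Matrix.of fun (_ : Fin 1) j => β j) (Matrix.of fun _ _ => γ))).PosSemidef := by
  have hX : X.IsHermitian := (conjTranspose_eq_transpose_of_trivial X).trans hs
  obtain ⟨v, μ, hXv, hv, hμ⟩ := hX.exists_eigenvector_sq_lt_one hc hne
  rw [star_trivial] at hv
  set t := √(1 - μ ^ 2)
  have ht : t * t = 1 - μ ^ 2 := Real.mul_self_sqrt (by linarith)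
  have ht0 : t ≠ 0 := (Real.sqrt_pos.2 (by linarith)).ne'
  have hv0 : v ≠ 0 := by rintro rfl; simp at hv
  have hβ : X *ᵥ (t • v) = -(-μ) • (t • v) := by rw [mulVec_smul, hXv, neg_neg, smul_comm]
  have hγ : (t • v) ⬝ᵥ (t • v) + (-μ) ^ 2 = 1 := by
    rw [dotProduct_smul, smul_dotProduct, hv, smul_eq_mul, smul_eq_mul, ← mul_assoc, mul_one, ht]
    ring
  have hcorner : (1 - X * X - vecMulVec (t • v) (t • v)).PosSemidef := by
    rw [smul_vecMulVec, vecMulVec_smul, smul_smul, ht]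
    simpa only [star_trivial] using hc.sub_smul_vecMulVec_star_of_mulVec_eq
      (one_sub_mul_self_mulVec_eq_smul hXv) (by rwa [star_trivial])
  refine ⟨t • v, -μ, smul_ne_zero ht0 hv0, ?_⟩
  convert hcorner.fromBlocks_zero (m := Fin 1) using 1
  exact one_sub_fromBlocks_mul_self (ι := Fin 1) hs hβ hγ
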